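/- arXiv:2302.08176 — 3 statements merged into one kernel-verified Lean document; each statement's English description precedes it below -/
import Mathlib

section
/- For every D ⊆ T one has sdt(sds(D)) = D. Moreover: (i) D is a coherent SDT if and only if sds(D) is a coherent SDS; (ii) if sds(D) is a coherent SDS then sds(D) is a finitely coherent SDS; and (iii) if cl is finitary, then D is a coherent SDT if and only if sds(D) is a finitely coherent SDS. -/
/-!
Since `{t}` meets `D` exactly when `t ∈ D`, we have `sdt (sds D) = D`, so the converse
directions follow from a general fact: `sdt K` is a coherent SDT whenever `K` is a coherent SDS
(or a finitely coherent one, for finitary `cl`). The point is that for `t ∈ cl F` with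
`F ⊆ sdt K`, axiom K5 applied to the singletons of `F` and the constant choice `t` gives
`{t} ∈ K`, because every selection map of the singletons of `F` has image `F`.
Conversely, for closed `D` the selection map picking things of `D` shows that `sds D` is K5-closed.
-/

universe u

variable {T : Type u}

/-- `cl` is a closure operator on subsets of `T`. -/
def IsClosure (cl : Set T → Set T) : Prop :=
  (∀ A : Set T, A ⊆ cl A) ∧
  (∀ A B : Set T, A ⊆ B → cl A ⊆ cl B) ∧
  (∀ A : Set T, cl (cl A) = cl A)

/-- `cl` is finitary: the closure of a set is the union of the closures of its
finite subsets. -/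
def IsFinitary (cl : Set T → Set T) : Prop :=
  ∀ A : Set T, cl A = ⋃ F ∈ {F : Set T | F.Finite ∧ F ⊆ A}, cl F

/-- A coherent set of desirable things (SDT): closed and avoiding the forbidden
things `Tneg`. -/
def CohSDT (cl : Set T → Set T) (Tneg : Set T) (D : Set T) : Prop :=
  cl D = D ∧ D ∩ Tneg = ∅

/-- Selection maps of a collection `W` of sets of things: maps choosing an
element of each member of `W`. -/
def Sel (W : Set (Set T)) : Type u :=
  {σ : Set T → T // ∀ A ∈ W, σ A ∈ A}

/-- A coherent set of desirable sets of things (SDS): axioms K1–K5. -/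
def CohSDS (cl : Set T → Set T) (Tneg : Set T) (K : Set (Set T)) : Prop :=
  (∅ : Set T) ∉ K ∧
  (∀ A₁ ∈ K, ∀ A₂ : Set T, A₁ ⊆ A₂ → A₂ ∈ K) ∧
  (∀ A ∈ K, A \ Tneg ∈ K) ∧
  (∀ t ∈ cl (∅ : Set T), ({t} : Set T) ∈ K) ∧
  (∀ W ⊆ K, W.Nonempty →
    ∀ f : Sel W → T, (∀ σ : Sel W, f σ ∈ cl (σ.1 '' W)) → Set.range f ∈ K)

/-- A finitely coherent SDS: axioms K1–K4 together with K5 restricted to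
nonempty finite subcollections. -/
def FinCohSDS (cl : Set T → Set T) (Tneg : Set T) (K : Set (Set T)) : Prop :=
  (∅ : Set T) ∉ K ∧
  (∀ A₁ ∈ K, ∀ A₂ : Set T, A₁ ⊆ A₂ → A₂ ∈ K) ∧
  (∀ A ∈ K, A \ Tneg ∈ K) ∧
  (∀ t ∈ cl (∅ : Set T), ({t} : Set T) ∈ K) ∧
  (∀ W ⊆ K, W.Finite → W.Nonempty →
    ∀ f : Sel W → T, (∀ σ : Sel W, f σ ∈ cl (σ.1 '' W)) → Set.range f ∈ K)

/-- A finitely coherent set of desirable finite sets of things (SDFS):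
axioms F1–F5. -/
def FinCohSDFS (cl : Set T → Set T) (Tneg : Set T) (K : Set (Set T)) : Prop :=
  (∀ F ∈ K, F.Finite) ∧
  (∅ : Set T) ∉ K ∧
  (∀ F₁ ∈ K, ∀ F₂ : Set T, F₂.Finite → F₁ ⊆ F₂ → F₂ ∈ K) ∧
  (∀ F ∈ K, F \ Tneg ∈ K) ∧
  (∀ t ∈ cl (∅ : Set T), ({t} : Set T) ∈ K) ∧
  (∀ W ⊆ K, W.Finite → W.Nonempty →
    ∀ f : Sel W → T, (∀ σ : Sel W, f σ ∈ cl (σ.1 '' W)) → Set.range f ∈ K)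

/-- The set of things whose singletons belong to `K`. -/
def sdt (K : Set (Set T)) : Set T := {t | ({t} : Set T) ∈ K}

/-- The SDS of all sets of things meeting `D`. -/
def sds (D : Set T) : Set (Set T) := {A | (A ∩ D).Nonempty}

/-- The SDFS of all finite sets of things meeting `D`. -/
def sdfs (D : Set T) : Set (Set T) := {F | F.Finite ∧ (F ∩ D).Nonempty}

/-- The event `𝒟_A` of all coherent SDTs meeting `A`. -/
def evA (cl : Set T → Set T) (Tneg : Set T) (A : Set T) : Set (Set T) :=
  {D | CohSDT cl Tneg D ∧ (A ∩ D).Nonempty}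

/-- The event `E(W)` of all coherent SDTs meeting every member of `W`
(with `E(∅)` equal to the set of all coherent SDTs). -/
def ev (cl : Set T → Set T) (Tneg : Set T) (W : Set (Set T)) : Set (Set T) :=
  {D | CohSDT cl Tneg D ∧ ∀ A ∈ W, (A ∩ D).Nonempty}

/-- An SDS is conjunctive if every desirable set contains a desirable
singleton. -/
def Conjunctive (K : Set (Set T)) : Prop :=
  ∀ A ∈ K, ∃ t ∈ A, ({t} : Set T) ∈ K

/-- Completeness of an SDS. -/
def CompleteSDS (K : Set (Set T)) : Prop :=
  ∀ A₁ A₂ : Set T, A₁ ∪ A₂ ∈ K → A₁ ∈ K ∨ A₂ ∈ K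

/-- The finitary part `K^f` of an SDS. -/
def finPart (K : Set (Set T)) : Set (Set T) :=
  {A | ∃ B ∈ K, B.Finite ∧ B ⊆ A}

/-- An SDS is finitary if every desirable set has a finite desirable subset. -/
def FinitarySDS (K : Set (Set T)) : Prop :=
  ∀ A ∈ K, ∃ B, B.Finite ∧ B ⊆ A ∧ B ∈ K

/-- The lattice of events `E`. -/
def Ecal (cl : Set T → Set T) (Tneg : Set T) : Set (Set (Set T)) :=
  {E | ∃ W : Set (Set T), E = ev cl Tneg W}

/-- The lattice of finitary events `E_fin`. -/
def Efin (cl : Set T → Set T) (Tneg : Set T) : Set (Set (Set T)) :=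
  {E | ∃ W : Set (Set T), W.Finite ∧ E = ev cl Tneg W}

/-- A filter on a lattice of events `L` ordered by inclusion. -/
def IsFilterOn (L F : Set (Set (Set T))) : Prop :=
  F ⊆ L ∧ F.Nonempty ∧
  (∀ E₁ ∈ F, ∀ E₂ ∈ L, E₁ ⊆ E₂ → E₂ ∈ F) ∧
  (∀ E₁ ∈ F, ∀ E₂ ∈ F, E₁ ∩ E₂ ∈ F)

/-- A proper filter on `L`. -/
def IsProperFilterOn (L F : Set (Set (Set T))) : Prop :=
  IsFilterOn L F ∧ F ≠ L

/-- A prime filter on `L`. -/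
def IsPrimeFilterOn (L F : Set (Set (Set T))) : Prop :=
  IsProperFilterOn L F ∧
  ∀ E₁ ∈ L, ∀ E₂ ∈ L, E₁ ∪ E₂ ∈ F → E₁ ∈ F ∨ E₂ ∈ F

/-- A proper principal filter on `L`: the upset of some nonempty `E₀ ∈ L`. -/
def IsProperPrincipalFilterOn (L F : Set (Set (Set T))) : Prop :=
  ∃ E₀ ∈ L, E₀ ≠ (∅ : Set (Set T)) ∧ F = {E' | E' ∈ L ∧ E₀ ⊆ E'}

/-- The map `f̂` sending an SDS to the collection of events of its finite
subcollections. -/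
def fhat (cl : Set T → Set T) (Tneg : Set T) (K : Set (Set T)) :
    Set (Set (Set T)) :=
  {E | ∃ W : Set (Set T), W ⊆ K ∧ W.Finite ∧ E = ev cl Tneg W}

/-- The map `f` sending an SDS to the collection of events of all of its
subcollections. -/
def fprin (cl : Set T → Set T) (Tneg : Set T) (K : Set (Set T)) :
    Set (Set (Set T)) :=
  {E | ∃ W : Set (Set T), W ⊆ K ∧ E = ev cl Tneg W}

/-- The map `d` sending a collection of events to the SDS it determines. -/
def dmap (cl : Set T → Set T) (Tneg : Set T) (F : Set (Set (Set T))) :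
    Set (Set T) :=
  {A : Set T | evA cl Tneg A ∈ F}

/-- `K` is finitely consistent: it is included in some finitely coherent SDS. -/
def FinConsistent (cl : Set T → Set T) (Tneg : Set T) (K : Set (Set T)) : Prop :=
  ∃ K' : Set (Set T), FinCohSDS cl Tneg K' ∧ K ⊆ K'

/-- `K` is consistent: it is included in some coherent SDS. -/
def Consistent (cl : Set T → Set T) (Tneg : Set T) (K : Set (Set T)) : Prop :=
  ∃ K' : Set (Set T), CohSDS cl Tneg K' ∧ K ⊆ K'

/-- The finitary closure operator on SDSes (with value `𝒫(T)` when `K` is not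
finitely consistent, via the empty-intersection convention). -/
def clFin (cl : Set T → Set T) (Tneg : Set T) (K : Set (Set T)) : Set (Set T) :=
  ⋂₀ {K' : Set (Set T) | FinCohSDS cl Tneg K' ∧ K ⊆ K'}

/-- The closure operator on SDSes (with value `𝒫(T)` when `K` is not
consistent, via the empty-intersection convention). -/
def clSDS (cl : Set T → Set T) (Tneg : Set T) (K : Set (Set T)) : Set (Set T) :=
  ⋂₀ {K' : Set (Set T) | CohSDS cl Tneg K' ∧ K ⊆ K'}

/-- Axiom K5 for the single collection `W`. -/
def ClosedUnderSel (cl : Set T → Set T) (K : Set (Set T)) (W : Set (Set T)) : Prop :=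
  ∀ f : Sel W → T, (∀ σ : Sel W, f σ ∈ cl (σ.1 '' W)) → Set.range f ∈ K

lemma singleton_mem_sds_iff {D : Set T} {t : T} : ({t} : Set T) ∈ sds D ↔ t ∈ D :=
  Set.singleton_inter_nonempty

lemma sdt_sds (D : Set T) : sdt (sds D) = D :=
  Set.ext fun _ => singleton_mem_sds_iff

lemma singleton_image_subset_iff {K : Set (Set T)} {F : Set T} :
    (singleton '' F : Set (Set T)) ⊆ K ↔ F ⊆ sdt K :=
  Set.image_subset_iff

lemma exists_sel_image_subset {D : Set T} {W : Set (Set T)} (hW : W ⊆ sds D)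
    (hne : W.Nonempty) : ∃ σ : Sel W, σ.1 '' W ⊆ D := by
  classical
  obtain ⟨A₀, hA₀⟩ := hne
  obtain ⟨t₀, -⟩ := hW hA₀
  let σ : Set T → T := fun A => if h : (A ∩ D).Nonempty then h.some else t₀
  have hσ : ∀ A ∈ W, σ A ∈ A ∩ D := fun A hA => by
    rw [show σ A = (hW hA).some from dif_pos (hW hA)]
    exact (hW hA).some_mem
  exact ⟨⟨σ, fun A hA => (hσ A hA).1⟩, Set.image_subset_iff.2 fun A hA => (hσ A hA).2⟩

lemma image_sel_singletons {F : Set T} (σ : Sel (singleton '' F : Set (Set T))) :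
    σ.1 '' (singleton '' F) = F := by
  have hσ : ∀ d ∈ F, σ.1 {d} = d := fun d hd => σ.2 {d} ⟨d, hd, rfl⟩
  rw [Set.image_image, Set.image_congr hσ, Set.image_id']

lemma singleton_mem_of_closedUnderSel {cl : Set T → Set T} {K : Set (Set T)} {F : Set T}
    (hF : F.Nonempty) (hK : ClosedUnderSel cl K (singleton '' F)) {t : T} (ht : t ∈ cl F) :
    ({t} : Set T) ∈ K := by
  have hsds : (singleton '' F : Set (Set T)) ⊆ sds F := by
    rintro _ ⟨d, hd, rfl⟩
    exact singleton_mem_sds_iff.2 hd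
  obtain ⟨σ, -⟩ := exists_sel_image_subset hsds (hF.image singleton)
  have : Nonempty (Sel (singleton '' F : Set (Set T))) := ⟨σ⟩
  simpa only [Set.range_const] using
    hK (fun _ => t) fun σ => by rwa [image_sel_singletons σ]

lemma cl_subset_sdt {cl : Set T → Set T} {K : Set (Set T)} {F : Set T}
    (hK4 : ∀ t ∈ cl (∅ : Set T), ({t} : Set T) ∈ K)
    (hK5 : F.Nonempty → ClosedUnderSel cl K (singleton '' F)) : cl F ⊆ sdt K := by
  rcases F.eq_empty_or_nonempty with rfl | hF
  · exact hK4
  · exact fun t ht => singleton_mem_of_closedUnderSel hF (hK5 hF) ht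

lemma sdt_inter_eq_empty {Tneg : Set T} {K : Set (Set T)} (hK1 : (∅ : Set T) ∉ K)
    (hK3 : ∀ A ∈ K, A \ Tneg ∈ K) : sdt K ∩ Tneg = ∅ := by
  refine Set.eq_empty_of_forall_notMem fun t ⟨ht, htneg⟩ => hK1 ?_
  rw [← Set.sdiff_eq_empty.2 (Set.singleton_subset_iff.2 htneg)]
  exact hK3 _ ht

namespace CohSDS

variable {cl : Set T → Set T} {Tneg : Set T} {K : Set (Set T)}

lemma finCohSDS (hK : CohSDS cl Tneg K) : FinCohSDS cl Tneg K :=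
  let ⟨hK1, hK2, hK3, hK4, hK5⟩ := hK
  ⟨hK1, hK2, hK3, hK4, fun W hW _ => hK5 W hW⟩

lemma cohSDT_sdt (hext : ∀ A : Set T, A ⊆ cl A) (hK : CohSDS cl Tneg K) :
    CohSDT cl Tneg (sdt K) := by
  obtain ⟨hK1, -, hK3, hK4, hK5⟩ := hK
  refine ⟨(cl_subset_sdt hK4 fun hF => ?_).antisymm (hext _), sdt_inter_eq_empty hK1 hK3⟩
  exact hK5 _ (singleton_image_subset_iff.2 subset_rfl) (hF.image _)

end CohSDS

lemma FinCohSDS.cohSDT_sdt {cl : Set T → Set T} {Tneg : Set T} {K : Set (Set T)}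
    (hext : ∀ A : Set T, A ⊆ cl A) (hfin : IsFinitary cl) (hK : FinCohSDS cl Tneg K) :
    CohSDT cl Tneg (sdt K) := by
  obtain ⟨hK1, -, hK3, hK4, hK5⟩ := hK
  refine ⟨subset_antisymm ?_ (hext _), sdt_inter_eq_empty hK1 hK3⟩
  rw [hfin]
  refine Set.iUnion₂_subset fun F ⟨hFfin, hFK⟩ => cl_subset_sdt hK4 fun hF => ?_
  exact hK5 _ (singleton_image_subset_iff.2 hFK) (hFfin.image _) (hF.image _)

lemma closedUnderSel_sds {cl : Set T → Set T} (hmono : ∀ A B : Set T, A ⊆ B → cl A ⊆ cl B)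
    {D : Set T} (hD : cl D ⊆ D) {W : Set (Set T)} (hW : W ⊆ sds D) (hne : W.Nonempty) :
    ClosedUnderSel cl (sds D) W := by
  intro f hf
  obtain ⟨σ, hσD⟩ := exists_sel_image_subset hW hne
  exact ⟨f σ, ⟨σ, rfl⟩, hD (hmono _ _ hσD (hf σ))⟩

lemma CohSDT.cohSDS_sds {cl : Set T → Set T} {Tneg D : Set T}
    (hmono : ∀ A B : Set T, A ⊆ B → cl A ⊆ cl B) (hD : CohSDT cl Tneg D) :
    CohSDS cl Tneg (sds D) := by
  obtain ⟨hclD, hDneg⟩ := hD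
  refine ⟨by simp [sds], fun A₁ hA₁ A₂ hA => hA₁.mono (Set.inter_subset_inter_left D hA),
    fun A ⟨t, htA, htD⟩ => ⟨t, ⟨htA, fun htneg => ?_⟩, htD⟩,
    fun t ht => singleton_mem_sds_iff.2 (hclD ▸ hmono _ _ (Set.empty_subset D) ht),
    fun W hW hne => closedUnderSel_sds hmono hclD.le hW hne⟩
  exact (Set.eq_empty_iff_forall_notMem.1 hDneg t) ⟨htD, htneg⟩

theorem cohSDT_to_cohSDS_general (T : Type u)
    (cl : Set T → Set T) (Tneg : Set T)
    (hcl : IsClosure cl)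
    (D : Set T) :
    sdt (sds D) = D ∧
    (CohSDT cl Tneg D ↔ CohSDS cl Tneg (sds D)) ∧
    (CohSDS cl Tneg (sds D) → FinCohSDS cl Tneg (sds D)) ∧
    (IsFinitary cl → (CohSDT cl Tneg D ↔ FinCohSDS cl Tneg (sds D))) := by
  obtain ⟨hext, hmono, -⟩ := hcl
  refine ⟨sdt_sds D, ⟨fun h => h.cohSDS_sds hmono, fun h => ?_⟩, CohSDS.finCohSDS,
    fun hfin => ⟨fun h => (h.cohSDS_sds hmono).finCohSDS, fun h => ?_⟩⟩
  · simpa only [sdt_sds] using h.cohSDT_sdt hext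
  · simpa only [sdt_sds] using h.cohSDT_sdt hext hfin

/-- Proposition on the map `sds` from coherent SDTs to (finitely) coherent
SDSes. -/
theorem cohSDT_to_cohSDS (T : Type u) [Nonempty T]
    (cl : Set T → Set T) (Tneg : Set T)
    (hcl : IsClosure cl) (hsan : cl (∅ : Set T) ∩ Tneg = ∅)
    (D : Set T) :
    sdt (sds D) = D ∧
    (CohSDT cl Tneg D ↔ CohSDS cl Tneg (sds D)) ∧
    (CohSDS cl Tneg (sds D) → FinCohSDS cl Tneg (sds D)) ∧
    (IsFinitary cl → (CohSDT cl Tneg D ↔ FinCohSDS cl Tneg (sds D))) :=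
  cohSDT_to_cohSDS_general T cl Tneg hcl D
end

section
/- (a) Let K be a coherent SDS and W₁, W₂ ⊆ 𝒫(T): if E(W₁) ⊆ E(W₂) and W₁ ⊆ K then W₂ ⊆ K; hence if E(W₁) = E(W₂) then W₁ ⊆ K ⟺ W₂ ⊆ K. (b) Let K be a finitely coherent SDS and W₁, W₂ finite subsets of 𝒫(T): if E(W₁) ⊆ E(W₂) and W₁ ⊆ K then W₂ ⊆ K; hence if E(W₁) = E(W₂) then W₁ ⊆ K ⟺ W₂ ⊆ K. -/
universe u

variable {T : Type u}

/-!
If `W₁ = ∅`, the coherent SDT `cl ∅` lies in `E(W₁) ⊆ E(W₂)`, so every `A ∈ W₂` contains some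
`t ∈ T⁺` and is desirable by K4 and K2. Otherwise, for every selection map `σ` of `W₁`, the closed
set `cl (σ(W₁))` either meets `T⁻` or is a coherent SDT in `E(W₁) ⊆ E(W₂)` and so meets `A`.
Picking `t_σ` in that intersection, K5 makes `{t_σ}` desirable, K3 discards the forbidden `t_σ`,
and what is left lies in `A`, which is therefore desirable by K2.
-/

/-- Axiom K5 of an SDS `K`, at one collection `W`. -/
def SelectionClosed (cl : Set T → Set T) (K W : Set (Set T)) : Prop :=
  ∀ f : Sel W → T, (∀ σ : Sel W, f σ ∈ cl (σ.1 '' W)) → Set.range f ∈ K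

section Transfer

variable {cl : Set T → Set T} {Tneg : Set T} {K W₁ W₂ : Set (Set T)}

theorem cohSDT_cl (hcl : IsClosure cl) {A : Set T} (hA : cl A ∩ Tneg = ∅) :
    CohSDT cl Tneg (cl A) :=
  ⟨hcl.2.2 A, hA⟩

theorem cl_image_mem_ev (hcl : IsClosure cl) (σ : Sel W₁) (hσ : cl (σ.1 '' W₁) ∩ Tneg = ∅) :
    cl (σ.1 '' W₁) ∈ ev cl Tneg W₁ :=
  ⟨cohSDT_cl hcl hσ, fun B hB => ⟨σ.1 B, σ.2 B hB, hcl.1 _ (Set.mem_image_of_mem _ hB)⟩⟩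

theorem exists_mem_cl_image_of_ev_subset (hcl : IsClosure cl)
    (hsub : ev cl Tneg W₁ ⊆ ev cl Tneg W₂) {A : Set T} (hA : A ∈ W₂) (σ : Sel W₁) :
    ∃ t ∈ cl (σ.1 '' W₁), t ∈ A ∨ t ∈ Tneg := by
  by_cases hneg : (cl (σ.1 '' W₁) ∩ Tneg).Nonempty
  · obtain ⟨t, htcl, htneg⟩ := hneg
    exact ⟨t, htcl, Or.inr htneg⟩
  · obtain ⟨t, htA, htcl⟩ :=
      (hsub (cl_image_mem_ev hcl σ (Set.not_nonempty_iff_eq_empty.mp hneg))).2 A hA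
    exact ⟨t, htcl, Or.inl htA⟩

theorem subset_of_ev_empty_subset (hcl : IsClosure cl) (hsan : cl ∅ ∩ Tneg = ∅)
    (hK2 : ∀ A₁ ∈ K, ∀ A₂ : Set T, A₁ ⊆ A₂ → A₂ ∈ K)
    (hK4 : ∀ t ∈ cl (∅ : Set T), ({t} : Set T) ∈ K)
    (hsub : ev cl Tneg ∅ ⊆ ev cl Tneg W₂) : W₂ ⊆ K := by
  intro A hA
  have hcl_empty : cl ∅ ∈ ev cl Tneg ∅ :=
    ⟨cohSDT_cl hcl hsan, fun _ hB => (Set.notMem_empty _ hB).elim⟩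
  obtain ⟨t, htA, htcl⟩ := (hsub hcl_empty).2 A hA
  exact hK2 _ (hK4 t htcl) A (Set.singleton_subset_iff.mpr htA)

theorem subset_of_ev_subset_of_selectionClosed (hcl : IsClosure cl)
    (hK2 : ∀ A₁ ∈ K, ∀ A₂ : Set T, A₁ ⊆ A₂ → A₂ ∈ K) (hK3 : ∀ A ∈ K, A \ Tneg ∈ K)
    (hK5 : SelectionClosed cl K W₁) (hsub : ev cl Tneg W₁ ⊆ ev cl Tneg W₂) : W₂ ⊆ K := by
  intro A hA
  choose f hf_cl hf_mem using exists_mem_cl_image_of_ev_subset hcl hsub hA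
  refine hK2 _ (hK3 _ (hK5 f hf_cl)) A ?_
  rintro _ ⟨⟨σ, rfl⟩, hσ⟩
  exact (hf_mem σ).resolve_right hσ

theorem subset_of_ev_subset (hcl : IsClosure cl) (hsan : cl ∅ ∩ Tneg = ∅)
    (hK2 : ∀ A₁ ∈ K, ∀ A₂ : Set T, A₁ ⊆ A₂ → A₂ ∈ K) (hK3 : ∀ A ∈ K, A \ Tneg ∈ K)
    (hK4 : ∀ t ∈ cl (∅ : Set T), ({t} : Set T) ∈ K)
    (hK5 : W₁.Nonempty → SelectionClosed cl K W₁) (hsub : ev cl Tneg W₁ ⊆ ev cl Tneg W₂) :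
    W₂ ⊆ K := by
  rcases W₁.eq_empty_or_nonempty with rfl | hne
  · exact subset_of_ev_empty_subset hcl hsan hK2 hK4 hsub
  · exact subset_of_ev_subset_of_selectionClosed hcl hK2 hK3 (hK5 hne) hsub

theorem CohSDS.subset_of_ev_subset (hcl : IsClosure cl) (hsan : cl ∅ ∩ Tneg = ∅)
    (hK : CohSDS cl Tneg K) (hsub : ev cl Tneg W₁ ⊆ ev cl Tneg W₂) (hW₁ : W₁ ⊆ K) :
    W₂ ⊆ K :=
  _root_.subset_of_ev_subset hcl hsan hK.2.1 hK.2.2.1 hK.2.2.2.1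
    (hK.2.2.2.2 W₁ hW₁) hsub

theorem FinCohSDS.subset_of_ev_subset (hcl : IsClosure cl) (hsan : cl ∅ ∩ Tneg = ∅)
    (hK : FinCohSDS cl Tneg K) (hW₁fin : W₁.Finite) (hsub : ev cl Tneg W₁ ⊆ ev cl Tneg W₂)
    (hW₁ : W₁ ⊆ K) : W₂ ⊆ K :=
  _root_.subset_of_ev_subset hcl hsan hK.2.1 hK.2.2.1 hK.2.2.2.1
    (hK.2.2.2.2 W₁ hW₁ hW₁fin) hsub

end Transfer

theorem event_inclusion_transfers_general (T : Type u)
    (cl : Set T → Set T) (Tneg : Set T)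
    (hcl : IsClosure cl) (hsan : cl (∅ : Set T) ∩ Tneg = ∅) :
    (∀ K : Set (Set T), CohSDS cl Tneg K → ∀ W₁ W₂ : Set (Set T),
      ((ev cl Tneg W₁ ⊆ ev cl Tneg W₂ → W₁ ⊆ K → W₂ ⊆ K) ∧
       (ev cl Tneg W₁ = ev cl Tneg W₂ → (W₁ ⊆ K ↔ W₂ ⊆ K)))) ∧
    (∀ K : Set (Set T), FinCohSDS cl Tneg K → ∀ W₁ W₂ : Set (Set T),
      W₁.Finite → W₂.Finite →
      ((ev cl Tneg W₁ ⊆ ev cl Tneg W₂ → W₁ ⊆ K → W₂ ⊆ K) ∧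
       (ev cl Tneg W₁ = ev cl Tneg W₂ → (W₁ ⊆ K ↔ W₂ ⊆ K)))) := by
  refine ⟨fun K hK W₁ W₂ => ⟨hK.subset_of_ev_subset hcl hsan, fun heq => ?_⟩,
    fun K hK W₁ W₂ hW₁ hW₂ => ⟨hK.subset_of_ev_subset hcl hsan hW₁, fun heq => ?_⟩⟩
  · exact ⟨hK.subset_of_ev_subset hcl hsan heq.le, hK.subset_of_ev_subset hcl hsan heq.ge⟩
  · exact ⟨hK.subset_of_ev_subset hcl hsan hW₁ heq.le,
      hK.subset_of_ev_subset hcl hsan hW₂ heq.ge⟩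

/-- It does not matter which collection generates an event: inclusions of
events transport membership in (finitely) coherent SDSes. -/
theorem event_inclusion_transfers (T : Type u) [Nonempty T]
    (cl : Set T → Set T) (Tneg : Set T)
    (hcl : IsClosure cl) (hsan : cl (∅ : Set T) ∩ Tneg = ∅) :
    (∀ K : Set (Set T), CohSDS cl Tneg K → ∀ W₁ W₂ : Set (Set T),
      ((ev cl Tneg W₁ ⊆ ev cl Tneg W₂ → W₁ ⊆ K → W₂ ⊆ K) ∧
       (ev cl Tneg W₁ = ev cl Tneg W₂ → (W₁ ⊆ K ↔ W₂ ⊆ K)))) ∧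
    (∀ K : Set (Set T), FinCohSDS cl Tneg K → ∀ W₁ W₂ : Set (Set T),
      W₁.Finite → W₂.Finite →
      ((ev cl Tneg W₁ ⊆ ev cl Tneg W₂ → W₁ ⊆ K → W₂ ⊆ K) ∧
       (ev cl Tneg W₁ = ev cl Tneg W₂ → (W₁ ⊆ K ↔ W₂ ⊆ K)))) :=
  event_inclusion_transfers_general T cl Tneg hcl hsan
end

section
/- Let K be a finitely coherent SDS and let F := f̂(K) = {E(W) : W a finite subset of K} be the corresponding proper filter on (E_fin, ⊆). Then F is a prime filter on (E_fin, ⊆) if and only if K is complete, i.e. for all A₁, A₂ ⊆ T, A₁ ∪ A₂ ∈ K implies A₁ ∈ K or A₂ ∈ K. -/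
universe u

variable {T : Type u}

/-!
The heart of the matter: if `W ⊆ K` is finite and `E(W) ⊆ 𝒟_A`, then `A ∈ K`. For every selection
map `σ` of `W`, either `cl(σ(W))` meets `T⁻`, or it is a coherent SDT in `E(W)` and so meets `A`;
hence every `cl(σ(W))` meets `T⁻ ∪ A`, axiom K5 puts `T⁻ ∪ A` in `K` and K3 puts `A` there (for
`W = ∅` the coherent SDT `cl(∅)` meets `A`, and K4 applies). Consequently `E(W) ∈ f̂(K)` exactly
when `W ⊆ K`, which makes `f̂(K)` a proper filter. Since
`E(W₁) ∪ E(W₂) = E({A ∪ B : A ∈ W₁, B ∈ W₂})`, primeness of `f̂(K)` says: whenever all these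
`A ∪ B` lie in `K`, so does all of `W₁` or all of `W₂`, and this is completeness of `K`.
-/

open Set

variable {cl : Set T → Set T} {Tneg : Set T} {K W W₁ W₂ : Set (Set T)} {A : Set T}

theorem ev_subset_evA (hA : A ∈ W) : ev cl Tneg W ⊆ evA cl Tneg A :=
  fun _ hD => ⟨hD.1, hD.2 A hA⟩

theorem ev_inter_ev : ev cl Tneg W₁ ∩ ev cl Tneg W₂ = ev cl Tneg (W₁ ∪ W₂) := by
  ext D
  simp only [ev, mem_inter_iff, mem_ofPred_eq, mem_union, or_imp, forall_and]
  tauto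

theorem ev_union_ev :
    ev cl Tneg W₁ ∪ ev cl Tneg W₂ = ev cl Tneg (image2 (· ∪ ·) W₁ W₂) := by
  ext D
  simp only [ev, mem_union, mem_ofPred_eq, forall_mem_image2, union_inter_distrib_right,
    union_nonempty]
  constructor
  · rintro (⟨hD, h⟩ | ⟨hD, h⟩)
    · exact ⟨hD, fun A hA _ _ => Or.inl (h A hA)⟩
    · exact ⟨hD, fun _ _ B hB => Or.inr (h B hB)⟩
  · rintro ⟨hD, h⟩
    by_cases h₁ : ∀ A ∈ W₁, (A ∩ D).Nonempty
    · exact Or.inl ⟨hD, h₁⟩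
    · obtain ⟨A, hA, hAD⟩ := not_forall₂.1 h₁
      exact Or.inr ⟨hD, fun B hB => (h A hA B hB).resolve_left hAD⟩

theorem CompleteSDS.subset_or_subset_of_image2_union_subset (hK : CompleteSDS K)
    (h : image2 (· ∪ ·) W₁ W₂ ⊆ K) : W₁ ⊆ K ∨ W₂ ⊆ K := by
  by_cases h₁ : W₁ ⊆ K
  · exact Or.inl h₁
  · obtain ⟨A, hA, hAK⟩ := not_subset.1 h₁
    exact Or.inr fun B hB => (hK A B (h (mem_image2_of_mem hA hB))).resolve_left hAK

namespace FinCohSDS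

theorem mem_of_forall_sel (hK : FinCohSDS cl Tneg K) (hWK : W ⊆ K) (hW : W.Finite)
    (hWne : W.Nonempty) (h : ∀ σ : Sel W, (cl (σ.1 '' W) ∩ (Tneg ∪ A)).Nonempty) : A ∈ K := by
  obtain ⟨-, hup, hdiff, -, hsel⟩ := hK
  choose f hf using h
  have hrange : range f ∈ K := hsel W hWK hW hWne f fun σ => (hf σ).1
  have hTA : Tneg ∪ A ∈ K := hup _ hrange _ (range_subset_iff.2 fun σ => (hf σ).2)
  exact hup _ (hdiff _ hTA) A (by rw [union_sdiff_left]; exact sdiff_subset)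

theorem mem_of_ev_subset_evA (hK : FinCohSDS cl Tneg K) (hext : ∀ A : Set T, A ⊆ cl A)
    (hidem : ∀ A : Set T, cl (cl A) = cl A) (hsan : cl (∅ : Set T) ∩ Tneg = ∅)
    (hWK : W ⊆ K) (hW : W.Finite) (h : ev cl Tneg W ⊆ evA cl Tneg A) : A ∈ K := by
  rcases W.eq_empty_or_nonempty with rfl | hWne
  · obtain ⟨t, htA, htD⟩ := (h ⟨⟨hidem ∅, hsan⟩, by simp⟩).2
    obtain ⟨-, hup, -, hsingleton, -⟩ := hK
    exact hup _ (hsingleton t htD) A (singleton_subset_iff.2 htA)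
  refine hK.mem_of_forall_sel hWK hW hWne fun σ => ?_
  by_contra hdisj
  rw [not_nonempty_iff_eq_empty, inter_union_distrib_left, union_empty_iff] at hdisj
  have hD : cl (σ.1 '' W) ∈ ev cl Tneg W :=
    ⟨⟨hidem _, hdisj.1⟩, fun B hB => ⟨σ.1 B, σ.2 B hB, hext _ (mem_image_of_mem _ hB)⟩⟩
  obtain ⟨t, htA, htD⟩ := (h hD).2
  exact (hdisj.2.subset ⟨htD, htA⟩).elim

theorem ev_mem_fhat_iff (hK : FinCohSDS cl Tneg K) (hext : ∀ A : Set T, A ⊆ cl A)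
    (hidem : ∀ A : Set T, cl (cl A) = cl A) (hsan : cl (∅ : Set T) ∩ Tneg = ∅)
    (hW : W.Finite) : ev cl Tneg W ∈ fhat cl Tneg K ↔ W ⊆ K := by
  refine ⟨fun ⟨W', hW'K, hW', hev⟩ A hA => ?_, fun hWK => ⟨W, hWK, hW, rfl⟩⟩
  exact hK.mem_of_ev_subset_evA hext hidem hsan hW'K hW' (hev ▸ ev_subset_evA hA)

theorem isProperFilterOn_fhat (hK : FinCohSDS cl Tneg K) (hext : ∀ A : Set T, A ⊆ cl A)
    (hidem : ∀ A : Set T, cl (cl A) = cl A) (hsan : cl (∅ : Set T) ∩ Tneg = ∅) :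
    IsProperFilterOn (Efin cl Tneg) (fhat cl Tneg K) := by
  have hfhat {W : Set (Set T)} (hW : W.Finite) := hK.ev_mem_fhat_iff hext hidem hsan hW
  refine ⟨⟨?_, ⟨_, ∅, empty_subset K, finite_empty, rfl⟩, ?_, ?_⟩, fun heq => ?_⟩
  · rintro _ ⟨W, -, hW, rfl⟩
    exact ⟨W, hW, rfl⟩
  · rintro _ ⟨W₁, hW₁K, hW₁, rfl⟩ _ ⟨W₂, hW₂, rfl⟩ hsub
    exact (hfhat hW₂).2 fun A hA =>
      hK.mem_of_ev_subset_evA hext hidem hsan hW₁K hW₁ (hsub.trans (ev_subset_evA hA))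
  · rintro _ ⟨W₁, hW₁K, hW₁, rfl⟩ _ ⟨W₂, hW₂K, hW₂, rfl⟩
    exact ev_inter_ev ▸ (hfhat (hW₁.union hW₂)).2 (union_subset hW₁K hW₂K)
  · have hempty : ev cl Tneg {∅} ∈ fhat cl Tneg K := heq ▸ ⟨{∅}, finite_singleton _, rfl⟩
    exact hK.1 ((hfhat (finite_singleton _)).1 hempty rfl)

end FinCohSDS

theorem prime_iff_complete_general (T : Type u)
    (cl : Set T → Set T) (Tneg : Set T)
    (hcl : IsClosure cl) (hsan : cl (∅ : Set T) ∩ Tneg = ∅)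
    (K : Set (Set T)) (hK : FinCohSDS cl Tneg K) :
    IsPrimeFilterOn (Efin cl Tneg) (fhat cl Tneg K) ↔ CompleteSDS K := by
  obtain ⟨hext, -, hidem⟩ := hcl
  have hfhat {W : Set (Set T)} (hW : W.Finite) := hK.ev_mem_fhat_iff hext hidem hsan hW
  constructor
  · rintro ⟨-, hprime⟩ A₁ A₂ hA
    have hunion : ev cl Tneg {A₁} ∪ ev cl Tneg {A₂} ∈ fhat cl Tneg K := by
      rw [ev_union_ev, image2_singleton]
      exact (hfhat (finite_singleton _)).2 (singleton_subset_iff.2 hA)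
    simpa only [hfhat (finite_singleton _), singleton_subset_iff] using
      hprime _ ⟨_, finite_singleton A₁, rfl⟩ _ ⟨_, finite_singleton A₂, rfl⟩ hunion
  · refine fun hcomp => ⟨hK.isProperFilterOn_fhat hext hidem hsan, ?_⟩
    rintro _ ⟨W₁, hW₁, rfl⟩ _ ⟨W₂, hW₂, rfl⟩ hunion
    rw [ev_union_ev, hfhat (hW₁.image2 _ hW₂)] at hunion
    simpa only [hfhat hW₁, hfhat hW₂] using hcomp.subset_or_subset_of_image2_union_subset hunion

/-- The filter `f̂(K)` corresponding to a finitely coherent SDS `K` is prime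
iff `K` is complete. -/
theorem prime_iff_complete (T : Type u) [Nonempty T]
    (cl : Set T → Set T) (Tneg : Set T)
    (hcl : IsClosure cl) (hsan : cl (∅ : Set T) ∩ Tneg = ∅)
    (K : Set (Set T)) (hK : FinCohSDS cl Tneg K) :
    IsPrimeFilterOn (Efin cl Tneg) (fhat cl Tneg K) ↔ CompleteSDS K :=
  prime_iff_complete_general T cl Tneg hcl hsan K hK
end
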